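/- arXiv:1912.12850 — 2 statements merged into one kernel-verified Lean document; each statement's English description precedes it below -/
import Mathlib

section
/- For all positive integers n and s, Φ_s(n) = n · Π_{p prime, p^s | n} (1 − 1/p^s), where the product is over all primes p such that p^s divides n and the empty product is 1. -/
/-!
`(m, n)_s = 1` exactly when no prime `p` with `p ^ s ∣ n` has `p ^ s ∣ m`. The moduli `p ^ s`
are pairwise coprime divisors of `n`, so among the `m ≤ N` avoiding the others, the multiples of
one more modulus `d ∣ N` are exactly `d` times the `m ≤ N / d` avoiding them. Each sieving step
therefore multiplies the count by `1 - 1 / d`.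
-/

/-- The generalized gcd of a nonnegative integer `n` at level `s`: the largest
`s`-th power `l ^ s` (with `l ≥ 1`) dividing `n`.  Applying it to `n = gcd(a, b)`
gives the generalized gcd `(a, b)_s` of the paper. -/
def sPowGcd (s n : ℕ) : ℕ := (Nat.findGreatest (fun l => l ^ s ∣ n) n) ^ s

/-- Klee's function `Φ_s(n)`: the number of `1 ≤ m ≤ n` with `(m, n)_s = 1`. -/
def klee (s n : ℕ) : ℕ :=
  ((Finset.Icc 1 n).filter (fun m => sPowGcd s (Nat.gcd m n) = 1)).card

open Finset Function

theorem sPowGcd_eq_one_iff {s n : ℕ} (hs : s ≠ 0) :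
    sPowGcd s n = 1 ↔ ∀ p, p.Prime → ¬ p ^ s ∣ n := by
  rcases Nat.eq_zero_or_pos n with rfl | hn
  · simpa [sPowGcd, hs] using ⟨2, Nat.prime_two⟩
  simp only [sPowGcd, pow_eq_one_iff, hs, or_false, Nat.findGreatest_eq_iff]
  constructor
  · rintro ⟨-, -, hmax⟩ p hp hpn
    exact hmax hp.one_lt ((Nat.le_self_pow hs p).trans (Nat.le_of_dvd hn hpn)) hpn
  · intro hfree
    refine ⟨hn, fun _ => by simp, fun l hl _ hln => ?_⟩
    exact hfree _ (Nat.minFac_prime hl.ne') ((pow_dvd_pow_of_dvd (Nat.minFac_dvd l) s).trans hln)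

theorem sPowGcd_gcd_eq_one_iff {s m n : ℕ} (hs : s ≠ 0) (hn : n ≠ 0) :
    sPowGcd s (Nat.gcd m n) = 1 ↔ ∀ p ∈ n.primeFactors.filter (fun p => p ^ s ∣ n), ¬ p ^ s ∣ m := by
  rw [sPowGcd_eq_one_iff hs]
  refine forall_congr' fun p => ?_
  simp only [mem_filter, Nat.mem_primeFactors, Nat.dvd_gcd_iff]
  constructor
  · rintro h ⟨⟨hp, -, -⟩, hpn⟩ hpm
    exact h hp ⟨hpm, hpn⟩
  · rintro h hp ⟨hpm, hpn⟩
    exact h ⟨⟨hp, (dvd_pow_self p hs).trans hpn, hn⟩, hpn⟩ hpm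

theorem card_filter_Icc_dvd_and {Q N : ℕ} (hQN : Q ∣ N) (P : ℕ → Prop) [DecidablePred P] :
    #{m ∈ Icc 1 N | Q ∣ m ∧ P m} = #{m ∈ Icc 1 (N / Q) | P (Q * m)} := by
  rcases Nat.eq_zero_or_pos Q with rfl | hQ
  · obtain rfl := zero_dvd_iff.1 hQN
    simp
  symm
  apply card_nbij' (Q * ·) (· / Q)
  · intro m hm
    simp only [coe_filter, mem_Icc, Set.mem_ofPred_eq, Nat.le_div_iff_mul_le hQ] at hm ⊢
    exact ⟨⟨Nat.mul_pos hQ hm.1.1, mul_comm Q m ▸ hm.1.2⟩, dvd_mul_right Q m, hm.2⟩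
  · rintro _ hm
    simp only [coe_filter, mem_Icc, Set.mem_ofPred_eq] at hm ⊢
    obtain ⟨⟨hm1, hmN⟩, ⟨k, rfl⟩, hP⟩ := hm
    rw [Nat.mul_div_cancel_left k hQ, Nat.le_div_iff_mul_le hQ, mul_comm]
    exact ⟨⟨Nat.pos_of_mul_pos_left hm1, hmN⟩, hP⟩
  · intro m _
    exact Nat.mul_div_cancel_left m hQ
  · intro m hm
    simp only [coe_filter, Set.mem_ofPred_eq] at hm
    exact Nat.mul_div_cancel' hm.2.1

theorem card_filter_Icc_not_dvd_and_add {Q N : ℕ} (hQN : Q ∣ N) (P : ℕ → Prop) [DecidablePred P]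
    (hP : ∀ m, P (Q * m) ↔ P m) :
    #{m ∈ Icc 1 N | ¬ Q ∣ m ∧ P m} + #{m ∈ Icc 1 (N / Q) | P m} = #{m ∈ Icc 1 N | P m} := by
  rw [← filter_congr fun m _ => hP m, ← card_filter_Icc_dvd_and hQN, add_comm,
    ← card_filter_add_card_filter_not (s := {m ∈ Icc 1 N | P m}) (Q ∣ ·),
    filter_filter, filter_filter]
  congr 2 <;> ext m <;> simp only [and_comm]

theorem card_filter_Icc_forall_not_dvd {ι : Type*} (T : Finset ι) (d : ι → ℕ)
    (hcop : (T : Set ι).Pairwise (Nat.Coprime on d)) {N : ℕ} (hdvd : ∀ i ∈ T, d i ∣ N) :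
    (#{m ∈ Icc 1 N | ∀ i ∈ T, ¬ d i ∣ m} : ℚ) = N * ∏ i ∈ T, (1 - 1 / (d i : ℚ)) := by
  classical
  induction T using Finset.induction_on generalizing N with
  | empty => simp
  | insert q T hq ih =>
    rcases Nat.eq_zero_or_pos N with rfl | hN
    · simp
    have hqN : d q ∣ N := hdvd q (mem_insert_self q T)
    have hq0 : (d q : ℚ) ≠ 0 := by exact_mod_cast (Nat.pos_of_dvd_of_pos hqN hN).ne'
    have hcopq : ∀ i ∈ T, (d i).Coprime (d q) := fun i hi =>
      hcop (mem_insert_of_mem hi) (mem_insert_self q T) (ne_of_mem_of_not_mem hi hq)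
    have hcopT : (T : Set ι).Pairwise (Nat.Coprime on d) := hcop.mono (by simp)
    have hdvdT : ∀ i ∈ T, d i ∣ N := fun i hi => hdvd i (mem_insert_of_mem hi)
    have hdvdT' : ∀ i ∈ T, d i ∣ N / d q := fun i hi =>
      (hcopq i hi).dvd_mul_left.1 ((Nat.mul_div_cancel' hqN).symm ▸ hdvdT i hi)
    have hsieve : #{m ∈ Icc 1 N | ∀ i ∈ insert q T, ¬ d i ∣ m}
        + #{m ∈ Icc 1 (N / d q) | ∀ i ∈ T, ¬ d i ∣ m} = #{m ∈ Icc 1 N | ∀ i ∈ T, ¬ d i ∣ m} := by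
      simpa only [forall_mem_insert] using card_filter_Icc_not_dvd_and_add hqN _
        fun m => forall₂_congr fun i hi => not_congr (hcopq i hi).dvd_mul_left
    have hsieveQ := congrArg (Nat.cast (R := ℚ)) hsieve
    rw [Nat.cast_add, ih hcopT hdvdT, ih hcopT hdvdT', Nat.cast_div hqN hq0] at hsieveQ
    rw [prod_insert hq]
    linear_combination hsieveQ

theorem stmt_8 (n s : ℕ) (hn : 0 < n) (hs : 0 < s) :
    (klee s n : ℚ) =
      (n : ℚ) * ∏ p ∈ n.primeFactors.filter (fun p => p ^ s ∣ n), (1 - 1 / (p : ℚ) ^ s) := by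
  have hprime : ∀ p ∈ n.primeFactors.filter (fun p => p ^ s ∣ n), p.Prime :=
    fun p hp => Nat.prime_of_mem_primeFactors (mem_filter.1 hp).1
  have hcop : ((n.primeFactors.filter (fun p => p ^ s ∣ n) : Finset ℕ) : Set ℕ).Pairwise
      (Nat.Coprime on (· ^ s)) := fun p hp q hq hpq =>
    Nat.coprime_pow_primes s s (hprime p hp) (hprime q hq) hpq
  rw [klee, filter_congr fun m _ => sPowGcd_gcd_eq_one_iff hs.ne' hn.ne']
  exact_mod_cast card_filter_Icc_forall_not_dvd _ _ hcop fun p hp => (mem_filter.1 hp).2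
end

section
/- For all positive integers n and s, Φ_s(n) equals the number of elements a of the additive group ℤ/nℤ such that n divided by the additive order of a is s-free, i.e., Φ_s(n) = #{a ∈ ℤ/nℤ : n / ord(a) is s-free}, where ord(a) denotes the additive order of a (which always divides n). -/
def sFree (s a : ℕ) : Prop := ∀ l : ℕ, 1 < l → ¬ l ^ s ∣ a

open Finset

theorem sPowGcd_eq_one_iff_s18 {s k : ℕ} (hs : 0 < s) (hk : 0 < k) :
    sPowGcd s k = 1 ↔ sFree s k := by
  set L := Nat.findGreatest (fun l => l ^ s ∣ k) k
  have hL : L ^ s ∣ k := Nat.findGreatest_spec (P := fun l => l ^ s ∣ k) (m := 1) hk (by simp)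
  have hL_pos : 1 ≤ L := Nat.le_findGreatest hk (by simp)
  rw [sPowGcd, pow_eq_one_iff_left hs.ne']
  refine ⟨fun hL1 l hl hdvd => ?_, fun hfree => ?_⟩
  · have hlk : l ≤ k := (Nat.le_self_pow hs.ne' l).trans (Nat.le_of_dvd hk hdvd)
    exact Nat.findGreatest_is_greatest (P := fun l => l ^ s ∣ k) (by omega) hlk hdvd
  · by_contra hL1
    exact hfree L (by omega) hL

namespace ZMod

theorem div_addOrderOf_natCast {n : ℕ} (hn : n ≠ 0) (m : ℕ) :
    n / addOrderOf (m : ZMod n) = m.gcd n := by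
  rw [addOrderOf_coe m hn, Nat.div_div_self (Nat.gcd_dvd_left n m) hn, Nat.gcd_comm]

theorem natCast_injOn_Icc (n : ℕ) : Set.InjOn (Nat.cast : ℕ → ZMod n) (Icc 1 n) := by
  suffices ∀ a ∈ Icc 1 n, ∀ b ∈ Icc 1 n, a ≤ b → (a : ZMod n) = b → a = b by
    intro a ha b hb hab
    rcases le_total a b with h | h
    exacts [this a ha b hb h hab, (this b hb a ha h hab.symm).symm]
  intro a ha b hb hab h
  simp only [mem_Icc] at ha hb
  have hdvd : n ∣ b - a := (Nat.modEq_iff_dvd' hab).1 ((natCast_eq_natCast_iff a b n).1 h)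
  have := Nat.eq_zero_of_dvd_of_lt hdvd (by omega)
  omega

theorem image_natCast_Icc (n : ℕ) [NeZero n] :
    (Icc 1 n).image (Nat.cast : ℕ → ZMod n) = univ := by
  refine eq_univ_of_forall fun a => mem_image.2 ?_
  by_cases ha : a = 0
  · exact ⟨n, by simp [Nat.one_le_iff_ne_zero, NeZero.ne n], by simp [ha]⟩
  · refine ⟨a.val, mem_Icc.2 ⟨Nat.one_le_iff_ne_zero.2 ((val_ne_zero a).2 ha), (val_lt a).le⟩,
      natCast_zmod_val a⟩

theorem card_subtype_eq_card_filter_Icc (n : ℕ) [NeZero n] (P : ZMod n → Prop) [DecidablePred P] :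
    Nat.card {a : ZMod n // P a} = #{m ∈ Icc 1 n | P ((m : ℕ) : ZMod n)} := by
  rw [Nat.card_eq_fintype_card, Fintype.card_subtype, ← image_natCast_Icc, filter_image,
    card_image_of_injOn ((natCast_injOn_Icc n).mono (filter_subset _ _))]

end ZMod

theorem stmt_18 (n s : ℕ) (hn : 0 < n) (hs : 0 < s) :
    klee s n = Nat.card {a : ZMod n // sFree s (n / addOrderOf a)} := by
  classical
  have : NeZero n := ⟨hn.ne'⟩
  rw [ZMod.card_subtype_eq_card_filter_Icc, klee]
  refine congrArg card (filter_congr fun m _ => ?_)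
  rw [ZMod.div_addOrderOf_natCast hn.ne', sPowGcd_eq_one_iff_s18 hs (Nat.gcd_pos_of_pos_right m hn)]
end
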